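/- Let V be a finite-dimensional bigraded rational vector space indexed by (m, a) ∈ ℤ × ℤ with total dimension 5, satisfying the symmetry dim V_{m,a} = dim V_{m-2a,-a} for all m, a, and supported in a single δ-grading (i.e., there exists δ ∈ ℤ such that V_{m,a} = 0 unless m - a = δ). If dim (⊕_m V_{m,0}) = 1 and g := max { a : ⊕_m V_{m,a} ≠ 0 } with dim(⊕_m V_{m,g}) = 1 and dim(⊕_m V_{m,g-1}) = 1, then there exists M ∈ ℤ such that V is one-dimensional exactly in bidegrees (M, g), (M-1, g-1), (M-g, 0), (M-2g+1, 1-g), (M-2g, -g), and zero elsewhere. -/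
import Mathlib


/-- A bigraded rational vector space is modeled by its (finitely
supported) dimension function `d : ℤ × ℤ →₀ ℕ`, `d (m, a) = dim V_{m,a}`.
Total dimension 5, symmetric (`dim V_{m,a} = dim V_{m-2a,-a}`), supported in a
single δ-grading (`δ = m - a`).  `A a` is the dimension in Alexander grading `a`.
If `A 0 = 1`, `g` is the top nonzero Alexander grading with `A g = 1` and
`A (g-1) = 1`, then there is `M` such that `V` is one-dimensional exactly in
bidegrees `(M,g), (M-1,g-1), (M-g,0), (M-2g+1,1-g), (M-2g,-g)`. -/
theorem stmt1 (d : ℤ × ℤ →₀ ℕ) (g : ℤ)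
    (htotal : d.sum (fun _ n => n) = 5)
    (hsym : ∀ m a : ℤ, d (m, a) = d (m - 2 * a, -a))
    (hδ : ∃ δ : ℤ, ∀ m a : ℤ, m - a ≠ δ → d (m, a) = 0)
    (A : ℤ → ℕ)
    (hA : ∀ a : ℤ, A a = (d.support.filter (fun p => p.2 = a)).sum (fun p => d p))
    (hmax : ∀ a : ℤ, g < a → A a = 0)
    (hAg : A g = 1) (hAg1 : A (g - 1) = 1) (hA0 : A 0 = 1) :
    ∃ M : ℤ, ∀ m a : ℤ,
      d (m, a) =
        if (m = M ∧ a = g) ∨ (m = M - 1 ∧ a = g - 1) ∨ (m = M - g ∧ a = 0)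
          ∨ (m = M - 2 * g + 1 ∧ a = 1 - g) ∨ (m = M - 2 * g ∧ a = -g)
        then 1 else 0 := by
  obtain ⟨δ, hδ⟩ := hδ
  have hd0 : ∀ m a : ℤ, m ≠ a + δ → d (m, a) = 0 := fun m a h => hδ m a (by omega)
  -- A a = d (a + δ, a)
  have hL1 : ∀ a : ℤ, A a = d (a + δ, a) := by
    intro a
    rw [hA a]
    have hsub : d.support.filter (fun p => p.2 = a) ⊆ {(a + δ, a)} := by
      intro p hp
      simp only [Finset.mem_filter, Finsupp.mem_support_iff] at hp
      simp only [Finset.mem_singleton]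
      have h1 : p.1 - p.2 = δ := by
        by_contra h
        exact hp.1 (by have := hδ p.1 p.2 h; simpa using this)
      have h2 : p = (p.1, p.2) := rfl
      rw [h2, hp.2, Prod.mk.injEq]
      exact ⟨by omega, rfl⟩
    rw [Finset.sum_subset hsub ?_, Finset.sum_singleton]
    intro x hx hnx
    simp only [Finset.mem_singleton] at hx
    subst hx
    simp only [Finset.mem_filter, Finsupp.mem_support_iff] at hnx
    by_contra hne
    exact hnx ⟨hne, trivial⟩
  have hsymA : ∀ a : ℤ, A a = A (-a) := by
    intro a
    rw [hL1, hL1, hsym (a + δ) a]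
    congr 2
    ring
  have hAneg : ∀ a : ℤ, a < -g → A a = 0 := fun a h => by
    rw [hsymA]; exact hmax _ (by omega)
  have hdleA : ∀ m a : ℤ, d (m, a) ≤ A a := by
    intro m a
    by_cases h : d (m, a) = 0
    · simp [h]
    · rw [hA]
      exact Finset.single_le_sum (f := fun p => d p) (fun p _ => Nat.zero_le _)
        (by simp [Finset.mem_filter, Finsupp.mem_support_iff, h])
  -- counting lemma
  have hcount : ∀ F : Finset ℤ, (∑ a ∈ F, A a)
      + ∑ p ∈ d.support.filter (fun p => ¬ p.2 ∈ F), d p = 5 := by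
    intro F
    have h1 := Finset.sum_filter_add_sum_filter_not d.support (fun p => p.2 ∈ F)
      (fun p => d p)
    have h2 : ∑ p ∈ d.support.filter (fun p => p.2 ∈ F), d p = ∑ a ∈ F, A a := by
      rw [← Finset.sum_fiberwise_of_maps_to (g := fun p => p.2) (t := F)
        (fun x hx => (Finset.mem_filter.mp hx).2) (fun p => d p)]
      apply Finset.sum_congr rfl
      intro a ha
      rw [hA a, Finset.filter_filter]
      apply Finset.sum_congr _ (fun _ _ => rfl)
      apply Finset.filter_congr
      intro p hp
      constructor
      · exact fun h => h.2
      · exact fun h => ⟨by simpa [h] using ha, h⟩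
    have h3 : d.sum (fun _ n => n) = ∑ p ∈ d.support, d p := rfl
    rw [h3] at htotal
    omega
  -- g ≥ 2
  have hg2 : 2 ≤ g := by
    rcases lt_trichotomy g 1 with h | h | h
    · rcases lt_trichotomy g 0 with h' | h' | h'
      · have h1 := hmax (-g) (by omega)
        have h2 := hsymA g
        omega
      · subst h'
        have h1 := hmax 1 (by omega)
        have h2 := hsymA (-1)
        simp only [neg_neg] at h2
        norm_num at hAg1
        omega
      · omega
    · -- g = 1 : total would be 3
      exfalso
      subst h
      have hc := hcount {1, 0, -1}
      have hsum : ∑ a ∈ ({1, 0, -1} : Finset ℤ), A a = 3 := by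
        rw [Finset.sum_insert (by simp), Finset.sum_insert (by simp),
          Finset.sum_singleton]
        have h1 : A (-1) = A 1 := by rw [hsymA (-1)]; norm_num
        omega
      have hrest : ∑ p ∈ d.support.filter (fun p => ¬ p.2 ∈ ({1, 0, -1} : Finset ℤ)), d p = 0 := by
        apply Finset.sum_eq_zero
        intro p hp
        simp only [Finset.mem_filter, Finsupp.mem_support_iff, Finset.mem_insert,
          Finset.mem_singleton] at hp
        have hle := hdleA p.1 p.2
        have hA2 : A p.2 = 0 := by
          rcases lt_trichotomy p.2 (-1) with h' | h' | h'
          · exact hAneg _ (by omega)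
          · exact absurd h' (by tauto)
          · rcases lt_trichotomy p.2 1 with h'' | h'' | h''
            · have : p.2 = 0 := by omega
              tauto
            · exact absurd h'' (by tauto)
            · exact hmax _ h''
        have hle2 : d p ≤ A p.2 := hdleA p.1 p.2
        omega
      omega
    · omega
  -- the five Alexander gradings all have A = 1
  have hA1g : A (1 - g) = 1 := by
    have := hsymA (1 - g)
    rw [show -(1 - g) = g - 1 by ring] at this
    omega
  have hAng : A (-g) = 1 := by have := hsymA g; omega
  -- support lies in the five gradings
  have hS : ∀ p ∈ d.support, p.2 = g ∨ p.2 = g - 1 ∨ p.2 = 0 ∨ p.2 = 1 - g ∨ p.2 = -g := by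
    have hc := hcount {g, g - 1, 0, 1 - g, -g}
    have hsum : ∑ a ∈ ({g, g - 1, 0, 1 - g, -g} : Finset ℤ), A a = 5 := by
      rw [Finset.sum_insert (by simp only [Finset.mem_insert, Finset.mem_singleton]; omega),
        Finset.sum_insert (by simp only [Finset.mem_insert, Finset.mem_singleton]; omega),
        Finset.sum_insert (by simp only [Finset.mem_insert, Finset.mem_singleton]; omega),
        Finset.sum_insert (by simp only [Finset.mem_singleton]; omega),
        Finset.sum_singleton]
      omega
    have hrest : ∑ p ∈ d.support.filter
        (fun p => ¬ p.2 ∈ ({g, g - 1, 0, 1 - g, -g} : Finset ℤ)), d p = 0 := by omega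
    intro p hp
    by_contra hcon
    push_neg at hcon
    have hmem : p ∈ d.support.filter
        (fun p => ¬ p.2 ∈ ({g, g - 1, 0, 1 - g, -g} : Finset ℤ)) := by
      simp only [Finset.mem_filter, Finset.mem_insert, Finset.mem_singleton]
      exact ⟨hp, by tauto⟩
    have := Finset.sum_eq_zero_iff.mp hrest p hmem
    simp only [Finsupp.mem_support_iff] at hp
    exact hp this
  -- conclusion
  refine ⟨g + δ, fun m a => ?_⟩
  by_cases hcase : d (m, a) = 0
  · rw [hcase]
    symm
    rw [if_neg]
    rintro (⟨rfl, ha⟩ | ⟨rfl, rfl⟩ | ⟨rfl, rfl⟩ | ⟨rfl, rfl⟩ | ⟨rfl, rfl⟩)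
    · rw [ha] at hcase; have := hL1 g; omega
    · have := hL1 (g - 1)
      rw [show (g : ℤ) - 1 + δ = g + δ - 1 by ring] at this
      omega
    · have := hL1 0
      rw [show (0 : ℤ) + δ = g + δ - g by ring] at this
      omega
    · have := hL1 (1 - g)
      rw [show (1 : ℤ) - g + δ = g + δ - 2 * g + 1 by ring] at this
      omega
    · have := hL1 (-g)
      rw [show -g + δ = g + δ - 2 * g by ring] at this
      omega
  · have hmem : (m, a) ∈ d.support := Finsupp.mem_support_iff.mpr hcase
    have ha := hS (m, a) hmem
    simp only at ha
    have hm : m = a + δ := by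
      by_contra h
      exact hcase (hd0 m a h)
    subst hm
    have hda : d (a + δ, a) = 1 := by
      rw [← hL1]
      rcases ha with rfl | rfl | rfl | rfl | rfl
      · exact hAg
      · exact hAg1
      · exact hA0
      · exact hA1g
      · exact hAng
    rw [hda, if_pos]
    rcases ha with rfl | rfl | rfl | rfl | rfl
    · exact Or.inl ⟨rfl, rfl⟩
    · exact Or.inr (Or.inl ⟨by ring, rfl⟩)
    · exact Or.inr (Or.inr (Or.inl ⟨by ring, rfl⟩))
    · exact Or.inr (Or.inr (Or.inr (Or.inl ⟨by ring, rfl⟩)))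
    · exact Or.inr (Or.inr (Or.inr (Or.inr ⟨by ring, rfl⟩)))
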